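/- Let φ : 𝒦 → [0,∞) be a size function, i.e., φ is continuous with respect to the Hausdorff metric, monotone (K ⊆ K' implies φ(K) ≤ φ(K')), and homogeneous (φ(αK) = |α|φ(K) for all α ∈ ℝ). Let p ≥ 1 affine maps f_i(x) = A_i x + b_i on ℝ^D, with λ_H = max_{1≤i≤p} ‖A_i‖, and let K_0 be a nonempty compact subset of ℝ^D with well-defined φ-renormalized orbit (K_n)_n and normalizing sequence (d_n)_n. Then: (i) if (d_n)_n converges to d > λ_H, then (K_n)_n converges in the Hausdorff metric to the attractor L_d of the IFS {f_1/d, …, f_p/d}, and d satisfies φ({(d·Id − A_1)^{-1}b_1, …, (d·Id − A_p)^{-1}b_p}) ≤ 1; (ii) if b_i = 0 for all i and (H^n(K_0))_n converges to a nonempty compact L with φ(L) ≠ 0, then (K_n)_n converges to K = (1/φ(L)) L. -/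

import Mathlib

open Metric Filter Pointwise Topology

noncomputable section

/-- The Hutchinson operator `H(K) = ⋃ i, f i '' K`. -/
def hutch {D p : ℕ} (f : Fin (p + 1) → EuclideanSpace ℝ (Fin D) → EuclideanSpace ℝ (Fin D))
    (K : Set (EuclideanSpace ℝ (Fin D))) : Set (EuclideanSpace ℝ (Fin D)) := ⋃ i, f i '' K

/-- The `φ`-renormalized Hutchinson operator `H_φ(K) = φ(H(K))⁻¹ • H(K)`. -/
def hutchPhi {D p : ℕ} (φ : Set (EuclideanSpace ℝ (Fin D)) → ℝ)
    (f : Fin (p + 1) → EuclideanSpace ℝ (Fin D) → EuclideanSpace ℝ (Fin D))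
    (K : Set (EuclideanSpace ℝ (Fin D))) : Set (EuclideanSpace ℝ (Fin D)) :=
  (φ (hutch f K))⁻¹ • hutch f K

/-!
In case (i) write `Kₙ₊₁ = cₙ • H(Kₙ)` with `cₙ = 1 / dₙ → 1 / d`. On compact sets `H` is
`λ_H`-Lipschitz for the Hausdorff distance, so comparing with `L = d⁻¹ • H(L)` gives
`dₕ(Kₙ₊₁, L) ≤ |cₙ| λ_H dₕ(Kₙ, L) + |cₙ - 1 / d| · sup_{H(L)} ‖·‖`: a contraction of ratio
`→ λ_H / d < 1` perturbed by a vanishing term, hence `dₕ(Kₙ, L) → 0`. The attractor `L_d` exists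
by Banach's fixed point theorem on nonempty compacts, and `φ(Kₙ) = 1` for `n ≥ 1` forces
`φ(L_d) = 1`. The points `(d - A_i)⁻¹ b_i` are the fixed points of the contractions `f_i / d`,
which leave `L_d` invariant, so they lie in `L_d` and monotonicity of `φ` gives the bound.

In case (ii) `H` commutes with scalings, so `Kₙ` is a positive multiple of `Hⁿ(K₀)`, and the
normalisation `φ(Kₙ) = 1` pins the multiple down to `1 / φ(Hⁿ(K₀)) → 1 / φ(L)`.
-/

open scoped NNReal

section HausdorffDist

variable {α β : Type*} [PseudoMetricSpace α] [PseudoMetricSpace β]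

theorem exists_dist_le_hausdorffDist {s t : Set α} {x : α} (hx : x ∈ s)
    (hs : Bornology.IsBounded s) (ht : IsCompact t) (htne : t.Nonempty) :
    ∃ y ∈ t, dist x y ≤ hausdorffDist s t := by
  obtain ⟨y, hy, hxy⟩ := ht.exists_infDist_eq_dist htne x
  exact ⟨y, hy, hxy ▸ infDist_le_hausdorffDist_of_mem hx
    (hausdorffEDist_ne_top_of_nonempty_of_bounded ⟨x, hx⟩ htne hs ht.isBounded)⟩

theorem hausdorffDist_iUnion_image_le {ι : Type*} {f : ι → α → β} {K : ℝ≥0}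
    (hf : ∀ i, LipschitzWith K (f i)) {s t : Set α} (hs : IsCompact s) (hsne : s.Nonempty)
    (ht : IsCompact t) (htne : t.Nonempty) :
    hausdorffDist (⋃ i, f i '' s) (⋃ i, f i '' t) ≤ K * hausdorffDist s t := by
  have approx : ∀ s t : Set α, IsCompact s → IsCompact t → t.Nonempty →
      ∀ x ∈ ⋃ i, f i '' s, ∃ y ∈ ⋃ i, f i '' t, dist x y ≤ K * hausdorffDist s t := by
    intro s t hs ht htne x hx
    obtain ⟨i, z, hz, rfl⟩ := Set.mem_iUnion.1 hx
    obtain ⟨y, hy, hzy⟩ := exists_dist_le_hausdorffDist hz hs.isBounded ht htne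
    exact ⟨f i y, Set.mem_iUnion.2 ⟨i, y, hy, rfl⟩,
      ((hf i).dist_le_mul z y).trans (mul_le_mul_of_nonneg_left hzy K.2)⟩
  refine hausdorffDist_le_of_mem_dist (mul_nonneg K.2 hausdorffDist_nonneg)
    (approx s t hs ht htne) fun x hx => ?_
  simpa only [hausdorffDist_comm] using approx t s ht hs hsne x hx

theorem hausdorffDist_image_le {f : α → β} {K : ℝ≥0} (hf : LipschitzWith K f) {s t : Set α}
    (hs : IsCompact s) (hsne : s.Nonempty) (ht : IsCompact t) (htne : t.Nonempty) :
    hausdorffDist (f '' s) (f '' t) ≤ K * hausdorffDist s t := by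
  simpa only [Set.iUnion_const] using
    hausdorffDist_iUnion_image_le (ι := Unit) (fun _ => hf) hs hsne ht htne

end HausdorffDist

section HausdorffDistSMul

variable {E : Type*} [NormedAddCommGroup E] [NormedSpace ℝ E]

theorem hausdorffDist_smul_le (c : ℝ) {s t : Set E} (hs : IsCompact s) (hsne : s.Nonempty)
    (ht : IsCompact t) (htne : t.Nonempty) :
    hausdorffDist (c • s) (c • t) ≤ |c| * hausdorffDist s t := by
  simpa only [Set.image_smul, coe_nnnorm, Real.norm_eq_abs] using
    hausdorffDist_image_le (lipschitzWith_smul c) hs hsne ht htne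

theorem hausdorffDist_smul_set_smul_le (c c' : ℝ) {s : Set E} (hsne : s.Nonempty) {M : ℝ}
    (hM : ∀ x ∈ s, ‖x‖ ≤ M) : hausdorffDist (c • s) (c' • s) ≤ |c - c'| * M := by
  have hM0 : 0 ≤ M := (norm_nonneg _).trans (hM _ hsne.some_mem)
  have approx : ∀ a a' : ℝ, ∀ x ∈ a • s, ∃ y ∈ a' • s, dist x y ≤ |a - a'| * M := by
    rintro a a' _ ⟨z, hz, rfl⟩
    refine ⟨a' • z, Set.smul_mem_smul_set hz, ?_⟩
    rw [dist_eq_norm, ← sub_smul, norm_smul, Real.norm_eq_abs]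
    exact mul_le_mul_of_nonneg_left (hM z hz) (abs_nonneg _)
  refine hausdorffDist_le_of_mem_dist (mul_nonneg (abs_nonneg _) hM0) (approx c c') fun x hx => ?_
  simpa only [abs_sub_comm] using approx c' c x hx

theorem hausdorffDist_smul_smul_le (c c' : ℝ) {s t : Set E} (hs : IsCompact s)
    (hsne : s.Nonempty) (ht : IsCompact t) (htne : t.Nonempty) {M : ℝ}
    (hM : ∀ x ∈ t, ‖x‖ ≤ M) :
    hausdorffDist (c • s) (c' • t) ≤ |c| * hausdorffDist s t + |c - c'| * M :=
  calc hausdorffDist (c • s) (c' • t)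
      ≤ hausdorffDist (c • s) (c • t) + hausdorffDist (c • t) (c' • t) :=
        hausdorffDist_triangle <| hausdorffEDist_ne_top_of_nonempty_of_bounded hsne.smul_set
          htne.smul_set (hs.smul c).isBounded (ht.smul c).isBounded
    _ ≤ |c| * hausdorffDist s t + |c - c'| * M :=
        add_le_add (hausdorffDist_smul_le c hs hsne ht htne)
          (hausdorffDist_smul_set_smul_le c c' htne hM)

theorem tendsto_hausdorffDist_smul {X : ℕ → Set E} {L : Set E} {c : ℕ → ℝ} {c₀ : ℝ}
    (hX : ∀ n, IsCompact (X n)) (hXne : ∀ n, (X n).Nonempty) (hL : IsCompact L)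
    (hLne : L.Nonempty) (hXL : Tendsto (fun n => hausdorffDist (X n) L) atTop (𝓝 0))
    (hc : Tendsto c atTop (𝓝 c₀)) :
    Tendsto (fun n => hausdorffDist (c n • X n) (c₀ • L)) atTop (𝓝 0) := by
  obtain ⟨M, hM⟩ := hL.isBounded.exists_norm_le
  have hbound : Tendsto (fun n => |c n| * hausdorffDist (X n) L + |c n - c₀| * M)
      atTop (𝓝 0) := by
    simpa using (hc.abs.mul hXL).add ((hc.sub_const c₀).abs.mul_const M)
  exact squeeze_zero (fun n => hausdorffDist_nonneg)
    (fun n => hausdorffDist_smul_smul_le _ _ (hX n) (hXne n) hL hLne hM) hbound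

end HausdorffDistSMul

theorem tendsto_zero_of_le_mul_add_of_lt_one {u ε : ℕ → ℝ} {r : ℝ} (hu : ∀ n, 0 ≤ u n)
    (hr0 : 0 ≤ r) (hr1 : r < 1) (hε : Tendsto ε atTop (𝓝 0))
    (hrec : ∀ᶠ n in atTop, u (n + 1) ≤ r * u n + ε n) : Tendsto u atTop (𝓝 0) := by
  refine tendsto_order.2 ⟨fun a ha => .of_forall fun n => ha.trans_le (hu n), fun a ha => ?_⟩
  have hgap : 0 < (1 - r) * (a / 2) := by nlinarith
  obtain ⟨N, hN⟩ := (hrec.and (hε.eventually (eventually_le_nhds hgap))).exists_forall_of_atTop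
  -- past `N`, the excess of `u` over `a / 2` contracts by the factor `r`
  have hdecay : ∀ k, u (N + k) - a / 2 ≤ r ^ k * u N := by
    intro k
    induction k with
    | zero => simp only [add_zero, pow_zero, one_mul]; linarith
    | succ k ih =>
      obtain ⟨hstep, hsmall⟩ := hN (N + k) (Nat.le_add_right N k)
      calc u (N + (k + 1)) - a / 2 ≤ r * (u (N + k) - a / 2) := by rw [← add_assoc]; linarith
        _ ≤ r * (r ^ k * u N) := mul_le_mul_of_nonneg_left ih hr0
        _ = r ^ (k + 1) * u N := by ring
  have hpow : Tendsto (fun k => r ^ k * u N) atTop (𝓝 0) := by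
    simpa using (tendsto_pow_atTop_nhds_zero_of_lt_one hr0 hr1).mul_const (u N)
  obtain ⟨k₀, hk₀⟩ := (hpow.eventually (gt_mem_nhds (half_pos ha))).exists_forall_of_atTop
  filter_upwards [eventually_ge_atTop (N + k₀)] with n hn
  obtain ⟨k, rfl⟩ := Nat.exists_eq_add_of_le ((Nat.le_add_right N k₀).trans hn)
  linarith [hdecay k, hk₀ k (by omega)]

theorem tendsto_zero_of_le_mul_add {u a ε : ℕ → ℝ} {ρ : ℝ} (hu : ∀ n, 0 ≤ u n)
    (ha : Tendsto a atTop (𝓝 ρ)) (hρ : ρ < 1) (hε : Tendsto ε atTop (𝓝 0))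
    (hrec : ∀ n, u (n + 1) ≤ a n * u n + ε n) : Tendsto u atTop (𝓝 0) := by
  obtain ⟨r, hρr, hr1⟩ := exists_between (max_lt hρ one_pos)
  refine tendsto_zero_of_le_mul_add_of_lt_one hu ((le_max_right _ _).trans hρr.le) hr1 hε ?_
  filter_upwards [ha.eventually (gt_mem_nhds ((le_max_left _ _).trans_lt hρr))] with n hn
  linarith [hrec n, mul_le_mul_of_nonneg_right hn.le (hu n)]

theorem ContractingWith.fixedPoint_mem {α : Type*} [MetricSpace α] [Nonempty α] [CompleteSpace α]
    {K : ℝ≥0} {g : α → α} (hg : ContractingWith K g) {s : Set α} (hs : IsClosed s)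
    (hsne : s.Nonempty) (hgs : Set.MapsTo g s s) : ContractingWith.fixedPoint g hg ∈ s := by
  obtain ⟨x, hx⟩ := hsne
  exact hs.mem_of_tendsto (hg.tendsto_iterate_fixedPoint x) (.of_forall fun n => hgs.iterate n hx)

theorem contractingWith_smul_comp {E : Type*} [NormedAddCommGroup E] [NormedSpace ℝ E]
    {K : ℝ≥0} {g : E → E} (hg : LipschitzWith K g) {c : ℝ} (hc : ‖c‖₊ * K < 1) :
    ContractingWith (‖c‖₊ * K) (fun x => c • g x) :=
  ⟨hc, (lipschitzWith_smul c).comp hg⟩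

theorem nnnorm_inv_mul_lt_one {K : ℝ≥0} {d : ℝ} (hKd : K < d) : ‖d⁻¹‖₊ * K < 1 := by
  have hd0 : 0 < d := K.2.trans_lt hKd
  rw [← NNReal.coe_lt_coe, NNReal.coe_mul, coe_nnnorm, norm_inv, Real.norm_of_nonneg hd0.le,
    NNReal.coe_one, inv_mul_lt_one₀ hd0]
  exact hKd

section Hutchinson

variable {D p : ℕ} {f : Fin (p + 1) → EuclideanSpace ℝ (Fin D) → EuclideanSpace ℝ (Fin D)}

theorem hutch_nonempty {K : Set (EuclideanSpace ℝ (Fin D))} (hK : K.Nonempty) :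
    (hutch f K).Nonempty :=
  ⟨f 0 hK.some, Set.mem_iUnion.2 ⟨0, hK.some, hK.some_mem, rfl⟩⟩

theorem isCompact_hutch (hf : ∀ i, Continuous (f i)) {K : Set (EuclideanSpace ℝ (Fin D))}
    (hK : IsCompact K) : IsCompact (hutch f K) :=
  isCompact_iUnion fun i => hK.image (hf i)

theorem mapsTo_hutch (hf : ∀ i, Continuous (f i)) :
    Set.MapsTo (hutch f) {K | IsCompact K ∧ K.Nonempty} {K | IsCompact K ∧ K.Nonempty} :=
  fun _ hK => ⟨isCompact_hutch hf hK.1, hutch_nonempty hK.2⟩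

theorem mapsTo_hutchPhi (φ : Set (EuclideanSpace ℝ (Fin D)) → ℝ) (hf : ∀ i, Continuous (f i)) :
    Set.MapsTo (hutchPhi φ f) {K | IsCompact K ∧ K.Nonempty} {K | IsCompact K ∧ K.Nonempty} :=
  fun _ hK => ⟨(isCompact_hutch hf hK.1).smul _, (hutch_nonempty hK.2).smul_set⟩

theorem hausdorffDist_hutch_le {K : ℝ≥0} (hf : ∀ i, LipschitzWith K (f i))
    {s t : Set (EuclideanSpace ℝ (Fin D))} (hs : IsCompact s) (hsne : s.Nonempty)
    (ht : IsCompact t) (htne : t.Nonempty) :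
    hausdorffDist (hutch f s) (hutch f t) ≤ K * hausdorffDist s t :=
  hausdorffDist_iUnion_image_le hf hs hsne ht htne

theorem hutch_smul (hlin : ∀ i (c : ℝ) x, f i (c • x) = c • f i x) (c : ℝ)
    (K : Set (EuclideanSpace ℝ (Fin D))) : hutch f (c • K) = c • hutch f K := by
  simp only [hutch, Set.smul_set_iUnion, Set.image_smul_comm _ _ _ (hlin _ c)]

theorem phi_hutchPhi {φ : Set (EuclideanSpace ℝ (Fin D)) → ℝ}
    (hφhom : ∀ (α : ℝ) K, φ (α • K) = |α| * φ K) {K : Set (EuclideanSpace ℝ (Fin D))}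
    (hK : 0 < φ (hutch f K)) : φ (hutchPhi φ f K) = 1 := by
  rw [hutchPhi, hφhom, abs_inv, abs_of_pos hK, inv_mul_cancel₀ hK.ne']

theorem phi_eq_one_of_tendsto {φ : Set (EuclideanSpace ℝ (Fin D)) → ℝ}
    (hφhom : ∀ (α : ℝ) K, φ (α • K) = |α| * φ K) {K₀ L : Set (EuclideanSpace ℝ (Fin D))}
    (hpos : ∀ n, 0 < φ (hutch f ((hutchPhi φ f)^[n] K₀)))
    (hφL : Tendsto (fun n => φ ((hutchPhi φ f)^[n] K₀)) atTop (𝓝 (φ L))) : φ L = 1 := by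
  refine tendsto_nhds_unique hφL ((tendsto_add_atTop_iff_nat 1).1 ?_)
  simp only [Function.iterate_succ_apply', phi_hutchPhi hφhom (hpos _), tendsto_const_nhds]

theorem exists_smul_hutch_eq {K : ℝ≥0} (hf : ∀ i, LipschitzWith K (f i)) {c : ℝ}
    (hc : ‖c‖₊ * K < 1) :
    ∃ L : TopologicalSpace.NonemptyCompacts (EuclideanSpace ℝ (Fin D)),
      c • hutch f (L : Set (EuclideanSpace ℝ (Fin D))) = L := by
  let T (L : TopologicalSpace.NonemptyCompacts (EuclideanSpace ℝ (Fin D))) :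
      TopologicalSpace.NonemptyCompacts (EuclideanSpace ℝ (Fin D)) :=
    ⟨⟨c • hutch f L, (isCompact_hutch (fun i => (hf i).continuous) L.isCompact).smul c⟩,
      (hutch_nonempty L.nonempty).smul_set⟩
  have hT : ContractingWith (‖c‖₊ * K) T := by
    refine ⟨hc, LipschitzWith.of_dist_le_mul fun L L' => ?_⟩
    rw [NonemptyCompacts.dist_eq, NonemptyCompacts.dist_eq]
    calc hausdorffDist (c • hutch f L) (c • hutch f L')
        ≤ |c| * hausdorffDist (hutch f L) (hutch f L') :=
          hausdorffDist_smul_le c (isCompact_hutch (fun i => (hf i).continuous) L.isCompact)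
            (hutch_nonempty L.nonempty)
            (isCompact_hutch (fun i => (hf i).continuous) L'.isCompact)
            (hutch_nonempty L'.nonempty)
      _ ≤ |c| * (K * hausdorffDist (L : Set _) L') := by
          gcongr
          exact hausdorffDist_hutch_le hf L.isCompact L.nonempty L'.isCompact L'.nonempty
      _ = _ := by push_cast; rw [Real.norm_eq_abs, mul_assoc]
  exact ⟨ContractingWith.fixedPoint T hT, congrArg SetLike.coe hT.fixedPoint_isFixedPt⟩

theorem fixedPoint_mem_of_smul_hutch_eq {K : ℝ≥0} (hf : ∀ i, LipschitzWith K (f i)) {c : ℝ}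
    (hc : ‖c‖₊ * K < 1) {L : Set (EuclideanSpace ℝ (Fin D))} (hLc : IsClosed L)
    (hLne : L.Nonempty) (hL : c • hutch f L = L) (i : Fin (p + 1)) :
    ContractingWith.fixedPoint _ (contractingWith_smul_comp (hf i) hc) ∈ L :=
  ContractingWith.fixedPoint_mem _ hLc hLne fun x hx =>
    hL ▸ Set.smul_mem_smul_set (Set.mem_iUnion.2 ⟨i, x, hx, rfl⟩)

end Hutchinson

section Orbit

variable {D p : ℕ} {f : Fin (p + 1) → EuclideanSpace ℝ (Fin D) → EuclideanSpace ℝ (Fin D)}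
  {φ : Set (EuclideanSpace ℝ (Fin D)) → ℝ} {K₀ : Set (EuclideanSpace ℝ (Fin D))}

theorem tendsto_hausdorffDist_iterate_hutchPhi {K : ℝ≥0} (hf : ∀ i, LipschitzWith K (f i))
    (hK₀c : IsCompact K₀) (hK₀ne : K₀.Nonempty) {d : ℝ}
    (hd : Tendsto (fun n => φ (hutch f ((hutchPhi φ f)^[n] K₀))) atTop (𝓝 d)) (hKd : K < d)
    {L : Set (EuclideanSpace ℝ (Fin D))} (hLc : IsCompact L) (hLne : L.Nonempty)
    (hL : d⁻¹ • hutch f L = L) :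
    Tendsto (fun n => hausdorffDist ((hutchPhi φ f)^[n] K₀) L) atTop (𝓝 0) := by
  have hcont i := (hf i).continuous
  have hd0 : 0 < d := K.2.trans_lt hKd
  obtain ⟨M, hM⟩ := (isCompact_hutch hcont hLc).isBounded.exists_norm_le
  have hc := hd.inv₀ hd0.ne'
  refine tendsto_zero_of_le_mul_add (fun n => hausdorffDist_nonneg) (hc.abs.mul_const (K : ℝ)) ?_
    (by simpa using (hc.sub_const d⁻¹).abs.mul_const M) fun n => ?_
  · rwa [abs_inv, abs_of_pos hd0, inv_mul_lt_one₀ hd0]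
  obtain ⟨hKn, hKnne⟩ := (mapsTo_hutchPhi φ hcont).iterate n ⟨hK₀c, hK₀ne⟩
  set c := (φ (hutch f ((hutchPhi φ f)^[n] K₀)))⁻¹
  calc hausdorffDist ((hutchPhi φ f)^[n + 1] K₀) L
      = hausdorffDist (c • hutch f ((hutchPhi φ f)^[n] K₀)) (d⁻¹ • hutch f L) := by
        rw [Function.iterate_succ_apply', hL]; rfl
    _ ≤ |c| * hausdorffDist (hutch f ((hutchPhi φ f)^[n] K₀)) (hutch f L) + |c - d⁻¹| * M :=
        hausdorffDist_smul_smul_le _ _ (isCompact_hutch hcont hKn) (hutch_nonempty hKnne)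
          (isCompact_hutch hcont hLc) (hutch_nonempty hLne) hM
    _ ≤ |c| * K * hausdorffDist ((hutchPhi φ f)^[n] K₀) L + |c - d⁻¹| * M := by
        rw [mul_assoc]
        gcongr
        exact hausdorffDist_hutch_le hf hKn hKnne hLc hLne

theorem iterate_hutchPhi_eq_smul (hlin : ∀ i (c : ℝ) x, f i (c • x) = c • f i x)
    (hpos : ∀ n, 0 < φ (hutch f ((hutchPhi φ f)^[n] K₀))) (n : ℕ) :
    ∃ c : ℝ, 0 < c ∧ (hutchPhi φ f)^[n] K₀ = c • (hutch f)^[n] K₀ := by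
  induction n with
  | zero => exact ⟨1, one_pos, (one_smul _ _).symm⟩
  | succ n ih =>
    obtain ⟨c, hc, hKn⟩ := ih
    refine ⟨(φ (hutch f ((hutchPhi φ f)^[n] K₀)))⁻¹ * c, mul_pos (inv_pos.2 (hpos n)) hc, ?_⟩
    rw [Function.iterate_succ_apply', Function.iterate_succ_apply', mul_smul, ← hutch_smul hlin,
      ← hKn]
    rfl

theorem iterate_succ_hutchPhi (hφhom : ∀ (α : ℝ) K, φ (α • K) = |α| * φ K)
    (hlin : ∀ i (c : ℝ) x, f i (c • x) = c • f i x)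
    (hpos : ∀ n, 0 < φ (hutch f ((hutchPhi φ f)^[n] K₀))) (n : ℕ) :
    (hutchPhi φ f)^[n + 1] K₀ = (φ ((hutch f)^[n + 1] K₀))⁻¹ • (hutch f)^[n + 1] K₀ := by
  obtain ⟨c, hc, hKn⟩ := iterate_hutchPhi_eq_smul hlin hpos (n + 1)
  have hφKn : φ ((hutchPhi φ f)^[n + 1] K₀) = 1 := by
    rw [Function.iterate_succ_apply']
    exact phi_hutchPhi hφhom (hpos n)
  rw [hKn, hφhom, abs_of_pos hc] at hφKn
  rw [hKn, eq_inv_of_mul_eq_one_left hφKn]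

end Orbit

section Affine

variable {D p : ℕ} {A : Fin (p + 1) → EuclideanSpace ℝ (Fin D) →L[ℝ] EuclideanSpace ℝ (Fin D)}
  {b : Fin (p + 1) → EuclideanSpace ℝ (Fin D)}
  {f : Fin (p + 1) → EuclideanSpace ℝ (Fin D) → EuclideanSpace ℝ (Fin D)}

theorem lipschitzWith_nnnorm_of_affine (hf : ∀ i x, f i x = A i x + b i) (i : Fin (p + 1)) :
    LipschitzWith ‖A i‖₊ (f i) :=
  LipschitzWith.of_dist_le_mul fun x y => by
    rw [hf, hf, dist_add_right]
    exact (A i).lipschitz.dist_le_mul x y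

theorem exists_lipschitzWith_lt_of_affine (hf : ∀ i x, f i x = A i x + b i) {d : ℝ}
    (hd : Finset.univ.sup' Finset.univ_nonempty (fun i => ‖A i‖) < d) :
    ∃ K : ℝ≥0, K < d ∧ ∀ i, LipschitzWith K (f i) := by
  refine ⟨Finset.univ.sup' Finset.univ_nonempty fun i => ‖A i‖₊, ?_, fun i =>
    (lipschitzWith_nnnorm_of_affine hf i).weaken
      (Finset.le_sup' (fun i => ‖A i‖₊) (Finset.mem_univ i))⟩
  refine Real.lt_toNNReal_iff_coe_lt.1 ((Finset.sup'_lt_iff _).2 fun i _ => ?_)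
  exact Real.lt_toNNReal_iff_coe_lt.2 ((Finset.sup'_lt_iff _).1 hd i (Finset.mem_univ i))

theorem setOf_smul_sub_eq_range_fixedPoint (hf : ∀ i x, f i x = A i x + b i) {K : ℝ≥0}
    (hLip : ∀ i, LipschitzWith K (f i)) {d : ℝ} (hd : d ≠ 0) (hc : ‖d⁻¹‖₊ * K < 1) :
    {x | ∃ i, d • x - A i x = b i} =
      Set.range fun i => ContractingWith.fixedPoint _ (contractingWith_smul_comp (hLip i) hc) := by
  ext x
  refine exists_congr fun i => ?_
  have hg := contractingWith_smul_comp (hLip i) hc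
  calc d • x - A i x = b i ↔ d⁻¹ • f i x = x := by
        rw [hf, inv_smul_eq_iff₀ hd, sub_eq_iff_eq_add, add_comm, eq_comm]
    _ ↔ _ := ⟨fun h => (hg.fixedPoint_unique h).symm, fun h => h ▸ hg.fixedPoint_isFixedPt⟩

end Affine

theorem stmt16_general {D p : ℕ}
    (φ : Set (EuclideanSpace ℝ (Fin D)) → ℝ)
    (hφcont : ∀ (Ks : ℕ → Set (EuclideanSpace ℝ (Fin D)))
      (L : Set (EuclideanSpace ℝ (Fin D))),
      (∀ n, IsCompact (Ks n)) → (∀ n, (Ks n).Nonempty) → IsCompact L → L.Nonempty →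
      Tendsto (fun n => hausdorffDist (Ks n) L) atTop (𝓝 0) →
      Tendsto (fun n => φ (Ks n)) atTop (𝓝 (φ L)))
    (hφmono : ∀ K K' : Set (EuclideanSpace ℝ (Fin D)), IsCompact K → K.Nonempty →
      IsCompact K' → K ⊆ K' → φ K ≤ φ K')
    (hφhom : ∀ (α : ℝ) (K : Set (EuclideanSpace ℝ (Fin D))), φ (α • K) = |α| * φ K)
    (A : Fin (p + 1) → EuclideanSpace ℝ (Fin D) →L[ℝ] EuclideanSpace ℝ (Fin D))
    (b : Fin (p + 1) → EuclideanSpace ℝ (Fin D))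
    (f : Fin (p + 1) → EuclideanSpace ℝ (Fin D) → EuclideanSpace ℝ (Fin D))
    (hf : ∀ i x, f i x = A i x + b i)
    (K₀ : Set (EuclideanSpace ℝ (Fin D))) (hK₀c : IsCompact K₀) (hK₀ne : K₀.Nonempty)
    (hpos : ∀ n, 0 < φ (hutch f ((hutchPhi φ f)^[n] K₀))) :
    (∀ d : ℝ, Tendsto (fun n => φ (hutch f ((hutchPhi φ f)^[n] K₀))) atTop (𝓝 d) →
      Finset.univ.sup' Finset.univ_nonempty (fun i => ‖A i‖) < d →
      (∀ L : Set (EuclideanSpace ℝ (Fin D)), IsCompact L → L.Nonempty →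
        d⁻¹ • hutch f L = L →
        Tendsto (fun n => hausdorffDist ((hutchPhi φ f)^[n] K₀) L) atTop (𝓝 0)) ∧
      φ {x | ∃ i, d • x - A i x = b i} ≤ 1) ∧
    ((∀ i, b i = 0) →
      ∀ L : Set (EuclideanSpace ℝ (Fin D)), IsCompact L → L.Nonempty → φ L ≠ 0 →
      Tendsto (fun n => hausdorffDist ((hutch f)^[n] K₀) L) atTop (𝓝 0) →
      Tendsto (fun n => hausdorffDist ((hutchPhi φ f)^[n] K₀) ((φ L)⁻¹ • L))
        atTop (𝓝 0)) := by
  have hcont i := (lipschitzWith_nnnorm_of_affine hf i).continuous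
  refine ⟨fun d hdt hAd => ?_, fun hb L hLc hLne hφL hconv => ?_⟩
  · obtain ⟨K, hKd, hLip⟩ := exists_lipschitzWith_lt_of_affine hf hAd
    have hc := nnnorm_inv_mul_lt_one hKd
    have hconv (L : Set _) (hLc : IsCompact L) (hLne : L.Nonempty) (hL : d⁻¹ • hutch f L = L) :=
      tendsto_hausdorffDist_iterate_hutchPhi hLip hK₀c hK₀ne hdt hKd hLc hLne hL
    refine ⟨hconv, ?_⟩
    obtain ⟨L, hL⟩ := exists_smul_hutch_eq hLip hc
    have horbit n := (mapsTo_hutchPhi φ hcont).iterate n ⟨hK₀c, hK₀ne⟩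
    have hφL : φ L = 1 := phi_eq_one_of_tendsto hφhom hpos <| hφcont _ L (fun n => (horbit n).1)
      (fun n => (horbit n).2) L.isCompact L.nonempty (hconv L L.isCompact L.nonempty hL)
    rw [setOf_smul_sub_eq_range_fixedPoint hf hLip (K.2.trans_lt hKd).ne' hc, ← hφL]
    exact hφmono _ _ (Set.finite_range _).isCompact (Set.range_nonempty _) L.isCompact
      (Set.range_subset_iff.2
        (fixedPoint_mem_of_smul_hutch_eq hLip hc L.isCompact.isClosed L.nonempty hL))
  · have hlin : ∀ i (c : ℝ) x, f i (c • x) = c • f i x := fun i c x => by simp [hf, hb]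
    have horbit n := (mapsTo_hutch hcont).iterate (n + 1) ⟨hK₀c, hK₀ne⟩
    have hshift := (tendsto_add_atTop_iff_nat 1).2 hconv
    rw [← tendsto_add_atTop_iff_nat 1]
    simp only [iterate_succ_hutchPhi hφhom hlin hpos]
    exact tendsto_hausdorffDist_smul (fun n => (horbit n).1) (fun n => (horbit n).2) hLc hLne
      hshift ((hφcont _ L (fun n => (horbit n).1) (fun n => (horbit n).2) hLc hLne
        hshift).inv₀ hφL)

/-- Theorem `theo:cvgfhi`. Let `φ` be a size function (continuous for the
Hausdorff metric, monotone and homogeneous, with values in `[0, ∞)`). Then: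
(i) if the `φ`-normalizing sequence `(d_n)` converges to `d > λ_H`, the `φ`-renormalized orbit
converges to the attractor `L_d` and `φ({(d·Id − A_i)⁻¹ b_i}) ≤ 1`;
(ii) if all `b_i = 0` and `(H^n(K₀))_n` converges to a nonempty compact `L` with `φ(L) ≠ 0`,
then the `φ`-renormalized orbit converges to `(1/φ(L)) L`. -/
theorem stmt16 {D p : ℕ}
    (φ : Set (EuclideanSpace ℝ (Fin D)) → ℝ)
    (hφ0 : ∀ K : Set (EuclideanSpace ℝ (Fin D)), IsCompact K → K.Nonempty → 0 ≤ φ K)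
    (hφcont : ∀ (Ks : ℕ → Set (EuclideanSpace ℝ (Fin D)))
      (L : Set (EuclideanSpace ℝ (Fin D))),
      (∀ n, IsCompact (Ks n)) → (∀ n, (Ks n).Nonempty) → IsCompact L → L.Nonempty →
      Tendsto (fun n => hausdorffDist (Ks n) L) atTop (𝓝 0) →
      Tendsto (fun n => φ (Ks n)) atTop (𝓝 (φ L)))
    (hφmono : ∀ K K' : Set (EuclideanSpace ℝ (Fin D)), IsCompact K → K.Nonempty →
      IsCompact K' → K ⊆ K' → φ K ≤ φ K')
    (hφhom : ∀ (α : ℝ) (K : Set (EuclideanSpace ℝ (Fin D))), φ (α • K) = |α| * φ K)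
    (A : Fin (p + 1) → EuclideanSpace ℝ (Fin D) →L[ℝ] EuclideanSpace ℝ (Fin D))
    (b : Fin (p + 1) → EuclideanSpace ℝ (Fin D))
    (f : Fin (p + 1) → EuclideanSpace ℝ (Fin D) → EuclideanSpace ℝ (Fin D))
    (hf : ∀ i x, f i x = A i x + b i)
    (K₀ : Set (EuclideanSpace ℝ (Fin D))) (hK₀c : IsCompact K₀) (hK₀ne : K₀.Nonempty)
    (hpos : ∀ n, 0 < φ (hutch f ((hutchPhi φ f)^[n] K₀))) :
    (∀ d : ℝ, Tendsto (fun n => φ (hutch f ((hutchPhi φ f)^[n] K₀))) atTop (𝓝 d) →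
      Finset.univ.sup' Finset.univ_nonempty (fun i => ‖A i‖) < d →
      (∀ L : Set (EuclideanSpace ℝ (Fin D)), IsCompact L → L.Nonempty →
        d⁻¹ • hutch f L = L →
        Tendsto (fun n => hausdorffDist ((hutchPhi φ f)^[n] K₀) L) atTop (𝓝 0)) ∧
      φ {x | ∃ i, d • x - A i x = b i} ≤ 1) ∧
    ((∀ i, b i = 0) →
      ∀ L : Set (EuclideanSpace ℝ (Fin D)), IsCompact L → L.Nonempty → φ L ≠ 0 →
      Tendsto (fun n => hausdorffDist ((hutch f)^[n] K₀) L) atTop (𝓝 0) →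
      Tendsto (fun n => hausdorffDist ((hutchPhi φ f)^[n] K₀) ((φ L)⁻¹ • L))
        atTop (𝓝 0)) :=
  stmt16_general φ hφcont hφmono hφhom A b f hf K₀ hK₀c hK₀ne hpos
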